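/- For every commutative ring R, every family w : ℤ → R, every integer ℓ ≥ -1 and every n ∈ ℤ, the identity A_{ℓ,0}(n+1) − A_{ℓ,0}(n) = w_{n+2} A_{ℓ,2}(n) − w_n A_{ℓ,2}(n−1) holds. -/
import Mathlib


/-- Coefficients of the powers `P^ℓ = Σ_k (aAux w ℓ k n) Λ^k` of the difference
operator `P = Λ + w_n Λ⁻¹` (natural-number power index `ℓ ≥ 0`). -/
def aAux {R : Type*} [CommRing R] (w : ℤ → R) : ℕ → ℤ → ℤ → R
  | 0, k, _ => if k = 0 then 1 else 0
  | l + 1, k, n => aAux w l (k - 1) n + w (n + k + 1) * aAux w l (k + 1) n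

/-- `aCoef w ℓ k n` is `A_{ℓ,k}(n)`, the coefficient of `Λ^k` in `P^{ℓ+1}`,
for an integer `ℓ` (meaningful for `ℓ ≥ -1`). -/
def aCoef {R : Type*} [CommRing R] (w : ℤ → R) (l k n : ℤ) : R := aAux w (l + 1).toNat k n

lemma aAux_key {R : Type*} [CommRing R] (w : ℤ → R) :
    ∀ (m : ℕ) (k n : ℤ),
      aAux w m (k - 1) n + w (n + k + 1) * aAux w m (k + 1) n =
      aAux w m (k - 1) (n + 1) + w n * aAux w m (k + 1) (n - 1) := by
  intro m
  induction m with
  | zero =>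
    intro k n
    by_cases hk : k = -1
    · subst hk; norm_num [aAux]
    · have h1 : ¬ (k + 1 = 0) := by omega
      simp [aAux, h1]
  | succ m ih =>
    intro k n
    show (aAux w m (k - 1 - 1) n + w (n + (k - 1) + 1) * aAux w m (k - 1 + 1) n)
        + w (n + k + 1) * (aAux w m (k + 1 - 1) n + w (n + (k + 1) + 1) * aAux w m (k + 1 + 1) n)
      = (aAux w m (k - 1 - 1) (n + 1) + w ((n + 1) + (k - 1) + 1) * aAux w m (k - 1 + 1) (n + 1))
        + w n * (aAux w m (k + 1 - 1) (n - 1) + w ((n - 1) + (k + 1) + 1) * aAux w m (k + 1 + 1) (n - 1))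
    have h1 := ih (k - 1) n
    have h2 := ih (k + 1) n
    have e1 : k - 1 - 1 = k - 1 - 1 := rfl
    have e2 : n + (k - 1) + 1 = n + k := by ring
    have e3 : k - 1 + 1 = k := by ring
    have e4 : k + 1 - 1 = k := by ring
    have e5 : n + (k + 1) + 1 = n + k + 2 := by ring
    have e6 : (n + 1) + (k - 1) + 1 = n + k + 1 := by ring
    have e7 : (n - 1) + (k + 1) + 1 = n + k + 1 := by ring
    rw [e2, e3, e4, e5, e6, e7]
    have h1' : aAux w m (k - 1 - 1) n + w (n + k) * aAux w m k n
        = aAux w m (k - 1 - 1) (n + 1) + w n * aAux w m k (n - 1) := by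
      have : n + (k - 1) + 1 = n + k := by ring
      rw [this] at h1
      simpa [e3] using h1
    have h2' : aAux w m k n + w (n + k + 2) * aAux w m (k + 1 + 1) n
        = aAux w m k (n + 1) + w n * aAux w m (k + 1 + 1) (n - 1) := by
      have : n + (k + 1) + 1 = n + k + 2 := by ring
      rw [this] at h2
      simpa [e4] using h2
    linear_combination h1' + w (n + k + 1) * h2'

theorem aCoef_zero_difference (R : Type*) [CommRing R] (w : ℤ → R) (l : ℤ) (hl : -1 ≤ l) (n : ℤ) :
    aCoef w l 0 (n + 1) - aCoef w l 0 n =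
      w (n + 2) * aCoef w l 2 n - w n * aCoef w l 2 (n - 1) := by
  have h := aAux_key w (l + 1).toNat 1 n
  have e : n + 1 + 1 = n + 2 := by ring
  rw [e] at h
  norm_num at h
  unfold aCoef
  linear_combination -h
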